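/- Let W₁ := (I⊗I⊗H⊗I) · C-V · C-U be the unitary on (ℂ²)^{⊗4} given by applying the controlled-U gate (control qubit 1, target qubit 2), then the controlled-V gate (control qubit 2, target qubit 1), then the Hadamard gate H on qubit 3, and let L be the linear map on (ℂ²)^{⊗4} defined on computational basis states by L|x₁x₂x₃x₄⟩ := |(x₁⊕x₃)(x₂⊕x₃)(x₃)(x₄⊕x₁⊕x₂⊕x₃)⟩, where ⊕ is addition mod 2. Then for all α, β ∈ ℂ, L(W₁((α|0⟩+β|1⟩) ⊗ |000⟩)) = (α/√2)(|0000⟩+|1111⟩) + (β/√6)(|0011⟩+|0101⟩+|0110⟩+|1001⟩+|1010⟩+|1100⟩); i.e. the encoding circuit implements the encoder En₄ of the code Q₄. -/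
import Mathlib


/- Common setup: (ℂ²)^{⊗n} is modeled as functions {0,1}ⁿ → ℂ, with computational
basis kets, outer products |u⟩⟨v|, and the partial trace over the i-th tensor factor. -/

open Matrix
open scoped ComplexConjugate ComplexOrder

noncomputable section

/-- The computational basis ket `|s⟩` for a bit string `s ∈ {0,1}ⁿ`. -/
def ket {n : ℕ} (s : Fin n → Fin 2) : (Fin n → Fin 2) → ℂ :=
  fun x => if x = s then 1 else 0

/-- The outer product `|u⟩⟨v|`. -/
def outer {ι : Type*} (u v : ι → ℂ) : Matrix ι ι ℂ :=
  Matrix.of fun i j => u i * conj (v j)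

/-- The partial trace over the `i`-th tensor factor (the single deletion error `D_i`);
it satisfies `ptrace i (A₁ ⊗ ⋯ ⊗ Aₙ) = Tr(A_i) • A₁ ⊗ ⋯ ⊗ A_{i-1} ⊗ A_{i+1} ⊗ ⋯ ⊗ Aₙ`. -/
def ptrace {m : ℕ} (i : Fin (m + 1))
    (A : Matrix (Fin (m + 1) → Fin 2) (Fin (m + 1) → Fin 2) ℂ) :
    Matrix (Fin m → Fin 2) (Fin m → Fin 2) ℂ :=
  Matrix.of fun y y' => ∑ b : Fin 2, A (i.insertNth b y) (i.insertNth b y')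

/-- The codeword `|Φ⟩ = (α/√2)(|0000⟩+|1111⟩) + (β/√6)(|0011⟩+|0101⟩+|0110⟩+|1001⟩+|1010⟩+|1100⟩)`. -/
def Phi (α β : ℂ) : (Fin 4 → Fin 2) → ℂ :=
  (α / (Real.sqrt 2 : ℂ)) • (ket ![0,0,0,0] + ket ![1,1,1,1])
    + (β / (Real.sqrt 6 : ℂ)) •
        (ket ![0,0,1,1] + ket ![0,1,0,1] + ket ![0,1,1,0]
          + ket ![1,0,0,1] + ket ![1,0,1,0] + ket ![1,1,0,0])

/-- The gate `U = [[1/√3, −√2/√3],[√2/√3, 1/√3]]`. -/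
def Ugate : Matrix (Fin 2) (Fin 2) ℂ :=
  !![(Real.sqrt 3 : ℂ)⁻¹, -((Real.sqrt 2 : ℂ) / (Real.sqrt 3 : ℂ));
     (Real.sqrt 2 : ℂ) / (Real.sqrt 3 : ℂ), (Real.sqrt 3 : ℂ)⁻¹]

/-- The gate `V = [[1/√2, 1/√2],[−1/√2, 1/√2]]`. -/
def Vgate : Matrix (Fin 2) (Fin 2) ℂ :=
  !![(Real.sqrt 2 : ℂ)⁻¹, (Real.sqrt 2 : ℂ)⁻¹;
     -(Real.sqrt 2 : ℂ)⁻¹, (Real.sqrt 2 : ℂ)⁻¹]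

/-- The Hadamard gate `H = [[1/√2, 1/√2],[1/√2, −1/√2]]`. -/
def Hgate : Matrix (Fin 2) (Fin 2) ℂ :=
  !![(Real.sqrt 2 : ℂ)⁻¹, (Real.sqrt 2 : ℂ)⁻¹;
     (Real.sqrt 2 : ℂ)⁻¹, -(Real.sqrt 2 : ℂ)⁻¹]

/-- The single-qubit gate `A` applied on the `t`-th tensor factor of `(ℂ²)^{⊗4}`
(identity on the other factors). -/
def onQubit (t : Fin 4) (A : Matrix (Fin 2) (Fin 2) ℂ) :
    Matrix (Fin 4 → Fin 2) (Fin 4 → Fin 2) ℂ :=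
  Matrix.of fun x y => if ∀ j, j ≠ t → x j = y j then A (x t) (y t) else 0

/-- The controlled-`A` gate on `(ℂ²)^{⊗4}` with control qubit `c` and target qubit `t`:
identity on basis states whose `c`-th bit is `0`, and `A` applied on the `t`-th factor
on basis states whose `c`-th bit is `1`. -/
def ctrlGate (c t : Fin 4) (A : Matrix (Fin 2) (Fin 2) ℂ) :
    Matrix (Fin 4 → Fin 2) (Fin 4 → Fin 2) ℂ :=
  Matrix.of fun x y =>
    if ∀ j, j ≠ t → x j = y j then
      (if y c = 1 then A (x t) (y t) else if x t = y t then 1 else 0)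
    else 0

/-- `W₁ = (I⊗I⊗H⊗I) · C-V · C-U`: first the controlled-`U` gate (control qubit 1,
target qubit 2), then the controlled-`V` gate (control qubit 2, target qubit 1),
then the Hadamard gate on qubit 3 (qubits are numbered `0,1,2,3` here). -/
def W1 : Matrix (Fin 4 → Fin 2) (Fin 4 → Fin 2) ℂ :=
  onQubit 2 Hgate * ctrlGate 1 0 Vgate * ctrlGate 0 1 Ugate

/-- The CNOT layer `L` of the encoding circuit:
`L|x₁x₂x₃x₄⟩ = |(x₁⊕x₃)(x₂⊕x₃)(x₃)(x₄⊕x₁⊕x₂⊕x₃)⟩` (addition in `Fin 2` is mod 2). -/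
def Lmat : Matrix (Fin 4 → Fin 2) (Fin 4 → Fin 2) ℂ :=
  Matrix.of fun x y =>
    if x = ![y 0 + y 2, y 1 + y 2, y 2, y 3 + y 0 + y 1 + y 2] then 1 else 0


/- ## Auxiliary lemmas for the proof -/

lemma mulVec_ket {n : ℕ} (M : Matrix (Fin n → Fin 2) (Fin n → Fin 2) ℂ) (s : Fin n → Fin 2) :
    M.mulVec (ket s) = fun y => M y s := by
  funext y
  simp [Matrix.mulVec, dotProduct, ket, mul_ite]

lemma fin4_ex (y : Fin 4 → Fin 2) : ∃ a b c d, y = ![a,b,c,d] :=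
  ⟨y 0, y 1, y 2, y 3, by funext i; fin_cases i <;> rfl⟩

lemma CU_col0 : (ctrlGate 0 1 Ugate).mulVec (ket ![0,0,0,0]) = ket ![0,0,0,0] := by
  rw [mulVec_ket]; funext y
  obtain ⟨a,b,c,d,rfl⟩ := fin4_ex y
  fin_cases a <;> fin_cases b <;> fin_cases c <;> fin_cases d <;>
    simp +decide [ctrlGate, ket, Ugate]

lemma CU_col1 : (ctrlGate 0 1 Ugate).mulVec (ket ![1,0,0,0])
    = ((Real.sqrt 3 : ℂ)⁻¹) • ket ![1,0,0,0]
      + ((Real.sqrt 2 : ℂ)/(Real.sqrt 3 : ℂ)) • ket ![1,1,0,0] := by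
  rw [mulVec_ket]; funext y
  obtain ⟨a,b,c,d,rfl⟩ := fin4_ex y
  fin_cases a <;> fin_cases b <;> fin_cases c <;> fin_cases d <;>
    simp +decide [ctrlGate, ket, Ugate]

lemma CV_col0 : (ctrlGate 1 0 Vgate).mulVec (ket ![0,0,0,0]) = ket ![0,0,0,0] := by
  rw [mulVec_ket]; funext y
  obtain ⟨a,b,c,d,rfl⟩ := fin4_ex y
  fin_cases a <;> fin_cases b <;> fin_cases c <;> fin_cases d <;>
    simp +decide [ctrlGate, ket, Vgate]

lemma CV_col1 : (ctrlGate 1 0 Vgate).mulVec (ket ![1,0,0,0]) = ket ![1,0,0,0] := by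
  rw [mulVec_ket]; funext y
  obtain ⟨a,b,c,d,rfl⟩ := fin4_ex y
  fin_cases a <;> fin_cases b <;> fin_cases c <;> fin_cases d <;>
    simp +decide [ctrlGate, ket, Vgate]

lemma CV_col2 : (ctrlGate 1 0 Vgate).mulVec (ket ![1,1,0,0])
    = ((Real.sqrt 2 : ℂ)⁻¹) • (ket ![0,1,0,0] + ket ![1,1,0,0]) := by
  rw [mulVec_ket]; funext y
  obtain ⟨a,b,c,d,rfl⟩ := fin4_ex y
  fin_cases a <;> fin_cases b <;> fin_cases c <;> fin_cases d <;>
    simp +decide [ctrlGate, ket, Vgate]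

lemma H_col00 : (onQubit 2 Hgate).mulVec (ket ![0,0,0,0])
    = ((Real.sqrt 2 : ℂ)⁻¹) • (ket ![0,0,0,0] + ket ![0,0,1,0]) := by
  rw [mulVec_ket]; funext y
  obtain ⟨p,q,r,s,rfl⟩ := fin4_ex y
  fin_cases p <;> fin_cases q <;> fin_cases r <;> fin_cases s <;>
    simp +decide [onQubit, ket, Hgate]

lemma H_col10 : (onQubit 2 Hgate).mulVec (ket ![1,0,0,0])
    = ((Real.sqrt 2 : ℂ)⁻¹) • (ket ![1,0,0,0] + ket ![1,0,1,0]) := by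
  rw [mulVec_ket]; funext y
  obtain ⟨p,q,r,s,rfl⟩ := fin4_ex y
  fin_cases p <;> fin_cases q <;> fin_cases r <;> fin_cases s <;>
    simp +decide [onQubit, ket, Hgate]

lemma H_col01 : (onQubit 2 Hgate).mulVec (ket ![0,1,0,0])
    = ((Real.sqrt 2 : ℂ)⁻¹) • (ket ![0,1,0,0] + ket ![0,1,1,0]) := by
  rw [mulVec_ket]; funext y
  obtain ⟨p,q,r,s,rfl⟩ := fin4_ex y
  fin_cases p <;> fin_cases q <;> fin_cases r <;> fin_cases s <;>
    simp +decide [onQubit, ket, Hgate]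

lemma H_col11 : (onQubit 2 Hgate).mulVec (ket ![1,1,0,0])
    = ((Real.sqrt 2 : ℂ)⁻¹) • (ket ![1,1,0,0] + ket ![1,1,1,0]) := by
  rw [mulVec_ket]; funext y
  obtain ⟨p,q,r,s,rfl⟩ := fin4_ex y
  fin_cases p <;> fin_cases q <;> fin_cases r <;> fin_cases s <;>
    simp +decide [onQubit, ket, Hgate]

lemma L_ket (s t : Fin 4 → Fin 2)
    (h : ![s 0 + s 2, s 1 + s 2, s 2, s 3 + s 0 + s 1 + s 2] = t) :
    Lmat.mulVec (ket s) = ket t := by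
  rw [mulVec_ket]
  show (fun x => if x = ![s 0 + s 2, s 1 + s 2, s 2, s 3 + s 0 + s 1 + s 2] then (1:ℂ) else 0) = _
  rw [h]; rfl

/-- the encoding circuit implements the encoder `En₄` of the code `Q₄`:
`L(W₁((α|0⟩+β|1⟩)⊗|000⟩)) = |Φ⟩`, where `(α|0⟩+β|1⟩)⊗|000⟩ = α|0000⟩+β|1000⟩`. -/
theorem encoding_circuit_implements_En4 (α β : ℂ) :
    Lmat.mulVec (W1.mulVec (α • ket ![0,0,0,0] + β • ket ![1,0,0,0])) = Phi α β := by
  have s2 : (Real.sqrt 2 : ℂ) ≠ 0 := by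
    exact_mod_cast Real.sqrt_ne_zero'.mpr (by norm_num)
  have s3 : (Real.sqrt 3 : ℂ) ≠ 0 := by
    exact_mod_cast Real.sqrt_ne_zero'.mpr (by norm_num)
  have m2 : (Real.sqrt 2 : ℂ) * (Real.sqrt 2 : ℂ) = 2 := by
    exact_mod_cast congrArg (Complex.ofReal) (Real.mul_self_sqrt (by norm_num : (0:ℝ) ≤ 2))
  have m3 : (Real.sqrt 3 : ℂ) * (Real.sqrt 3 : ℂ) = 3 := by
    exact_mod_cast congrArg (Complex.ofReal) (Real.mul_self_sqrt (by norm_num : (0:ℝ) ≤ 3))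
  have h6 : (Real.sqrt 6 : ℂ) = (Real.sqrt 2 : ℂ) * (Real.sqrt 3 : ℂ) := by
    rw [show (6:ℝ) = 2 * 3 by norm_num, Real.sqrt_mul (by norm_num)]
    push_cast; ring
  have e1 : (ctrlGate 0 1 Ugate).mulVec (α • ket ![0,0,0,0] + β • ket ![1,0,0,0])
      = α • ket ![0,0,0,0] + (β * (Real.sqrt 3 : ℂ)⁻¹) • ket ![1,0,0,0]
        + (β * ((Real.sqrt 2 : ℂ)/(Real.sqrt 3 : ℂ))) • ket ![1,1,0,0] := by
    rw [Matrix.mulVec_add, Matrix.mulVec_smul, Matrix.mulVec_smul, CU_col0, CU_col1]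
    simp only [smul_add, smul_smul]
    abel
  have e2 : (ctrlGate 1 0 Vgate).mulVec
        (α • ket ![0,0,0,0] + (β * (Real.sqrt 3 : ℂ)⁻¹) • ket ![1,0,0,0]
          + (β * ((Real.sqrt 2 : ℂ)/(Real.sqrt 3 : ℂ))) • ket ![1,1,0,0])
      = α • ket ![0,0,0,0] + (β * (Real.sqrt 3 : ℂ)⁻¹) • ket ![1,0,0,0]
        + (β * (Real.sqrt 3 : ℂ)⁻¹) • ket ![0,1,0,0]
        + (β * (Real.sqrt 3 : ℂ)⁻¹) • ket ![1,1,0,0] := by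
    rw [Matrix.mulVec_add, Matrix.mulVec_add, Matrix.mulVec_smul, Matrix.mulVec_smul,
      Matrix.mulVec_smul, CV_col0, CV_col1, CV_col2]
    simp only [smul_add, smul_smul]
    rw [show β * ((Real.sqrt 2 : ℂ)/(Real.sqrt 3 : ℂ)) * (Real.sqrt 2 : ℂ)⁻¹
        = β * (Real.sqrt 3 : ℂ)⁻¹ by linear_combination (β * (Real.sqrt 3 : ℂ)⁻¹) * mul_inv_cancel₀ s2]
    abel
  have e3 : (onQubit 2 Hgate).mulVec
        (α • ket ![0,0,0,0] + (β * (Real.sqrt 3 : ℂ)⁻¹) • ket ![1,0,0,0]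
          + (β * (Real.sqrt 3 : ℂ)⁻¹) • ket ![0,1,0,0]
          + (β * (Real.sqrt 3 : ℂ)⁻¹) • ket ![1,1,0,0])
      = (α * (Real.sqrt 2 : ℂ)⁻¹) • (ket ![0,0,0,0] + ket ![0,0,1,0])
        + (β * (Real.sqrt 6 : ℂ)⁻¹) • (ket ![1,0,0,0] + ket ![1,0,1,0])
        + (β * (Real.sqrt 6 : ℂ)⁻¹) • (ket ![0,1,0,0] + ket ![0,1,1,0])
        + (β * (Real.sqrt 6 : ℂ)⁻¹) • (ket ![1,1,0,0] + ket ![1,1,1,0]) := by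
    rw [Matrix.mulVec_add, Matrix.mulVec_add, Matrix.mulVec_add, Matrix.mulVec_smul,
      Matrix.mulVec_smul, Matrix.mulVec_smul, Matrix.mulVec_smul,
      H_col00, H_col10, H_col01, H_col11]
    simp only [smul_smul]
    rw [show β * (Real.sqrt 3 : ℂ)⁻¹ * (Real.sqrt 2 : ℂ)⁻¹ = β * (Real.sqrt 6 : ℂ)⁻¹ by
      rw [h6, mul_inv]; ring]
  rw [W1, Matrix.mul_assoc, ← Matrix.mulVec_mulVec, ← Matrix.mulVec_mulVec, e1, e2, e3]
  rw [Matrix.mulVec_add, Matrix.mulVec_add, Matrix.mulVec_add,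
    Matrix.mulVec_smul, Matrix.mulVec_smul, Matrix.mulVec_smul, Matrix.mulVec_smul,
    Matrix.mulVec_add, Matrix.mulVec_add, Matrix.mulVec_add, Matrix.mulVec_add,
    L_ket ![0,0,0,0] ![0,0,0,0] (by decide), L_ket ![0,0,1,0] ![1,1,1,1] (by decide),
    L_ket ![1,0,0,0] ![1,0,0,1] (by decide), L_ket ![1,0,1,0] ![0,1,1,0] (by decide),
    L_ket ![0,1,0,0] ![0,1,0,1] (by decide), L_ket ![0,1,1,0] ![1,0,1,0] (by decide),
    L_ket ![1,1,0,0] ![1,1,0,0] (by decide), L_ket ![1,1,1,0] ![0,0,1,1] (by decide)]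
  rw [Phi]
  rw [show α / (Real.sqrt 2 : ℂ) = α * (Real.sqrt 2 : ℂ)⁻¹ from div_eq_mul_inv α _,
    show β / (Real.sqrt 6 : ℂ) = β * (Real.sqrt 6 : ℂ)⁻¹ from div_eq_mul_inv β _]
  simp only [smul_add]
  abel

end
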